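/- arXiv:1706.01015 — 2 statements merged into one kernel-verified Lean document; each statement's English description precedes it below -/
import Mathlib

section
/- Let (r_n) be a sequence of positive real numbers with r_n → r for some r > 0. Then for every y ∈ [0,1], ∑_{k=0}^{⌊ny⌋} p_{n,r_n}(k) → ∫_0^y 2r(2r+1) x (1−x)^{2r−1} dx as n → ∞; that is, the rescaled degree D_n/n converges in distribution to a Beta(2, 2r) random variable. -/
/-!
Summing `p_{n,r}` telescopes: for `m ≤ n`, `∑_{k<m} p_{n,r}(k) = 1 - T_{n,r}(m)`, where the tail
`T_{n,r}(m)` is an explicit quadratic in `m` divided by `(n+2r)(n+2r-1)`, times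
`P_m = ∏_{i ≤ m} (n-i)/(n-i+2r-1) = ∏_{n-m ≤ j < n} j/(j+2r-1)`. For `m ≈ ny` the quadratic factor
tends to `(1-y)(1+2ry)`, while `log P_m = -(2r-1) ∑_{n-m ≤ j < n} 1/j + O(m/n²)` and the harmonic
sum tends to `-log(1-y)`, so `P_m → (1-y)^(2r-1)`. The limit `1 - (1+2ry)(1-y)^(2r)` is the
Beta(2, 2r) distribution function, by the fundamental theorem of calculus.
-/

open Filter Finset

/-- The probability mass function of the degree of a fixed vertex of the
split-and-drift random graph `G_{n,r}`:
`p_{n,r}(k) = [2r(2r+1)/((n+2r)(n-1+2r))] * (k+1) * prod_{i=1}^{k} (n-i)/(n-i+2r-1)`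
for `k < n` (the empty product being `1`), and `0` for `k >= n`. -/
noncomputable def splitDriftPMF (n : ℕ) (r : ℝ) (k : ℕ) : ℝ :=
  if k < n then
    2 * r * (2 * r + 1) / (((n : ℝ) + 2 * r) * ((n : ℝ) - 1 + 2 * r)) *
      ((k : ℝ) + 1) *
      ∏ i ∈ Finset.Icc 1 k, (((n : ℝ) - (i : ℝ)) / ((n : ℝ) - (i : ℝ) + 2 * r - 1))
  else 0

open Real Topology

/-- The tail mass `∑_{k ≥ m} p_{n,r}(k)`, in closed form. -/
noncomputable def splitDriftTail (n : ℕ) (r : ℝ) (m : ℕ) : ℝ :=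
  ((n : ℝ) + 2 * r - 1 - m) * (2 * r * ((m : ℝ) - 1) + n + 4 * r) /
      (((n : ℝ) + 2 * r) * ((n : ℝ) + 2 * r - 1)) *
    ∏ i ∈ Icc 1 m, (((n : ℝ) - i) / ((n : ℝ) - i + 2 * r - 1))

lemma sum_range_splitDriftPMF {n : ℕ} {r : ℝ} (hn : 0 < n) (hr : 0 < r) {m : ℕ}
    (hm : m ≤ n) :
    ∑ k ∈ range m, splitDriftPMF n r k = 1 - splitDriftTail n r m := by
  have hn1 : (1 : ℝ) ≤ n := by exact_mod_cast hn
  have hD₁ : (n : ℝ) + 2 * r ≠ 0 := by linarith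
  have hD₂ : (n : ℝ) + 2 * r - 1 ≠ 0 := by linarith
  induction m with
  | zero =>
    simp only [splitDriftTail, range_zero, sum_empty, Nat.cast_zero, Icc_eq_empty_of_lt one_pos,
      prod_empty, mul_one]
    field_simp
    ring
  | succ m ih =>
    have step : ((n : ℝ) + 2 * r - 1 - (m + 1)) * (2 * r * m + n + 4 * r) *
        (((n : ℝ) - (m + 1)) / ((n : ℝ) - (m + 1) + 2 * r - 1)) =
        ((n : ℝ) + 2 * r - 1 - m) * (2 * r * ((m : ℝ) - 1) + n + 4 * r)
          - 2 * r * (2 * r + 1) * (m + 1) := by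
      rcases hm.lt_or_eq with hlt | rfl
      · have : (m : ℝ) + 2 ≤ n := by exact_mod_cast hlt
        have : (n : ℝ) - (m + 1) + 2 * r - 1 ≠ 0 := by linarith
        field_simp
        ring
      · -- for `m + 1 = n` the last factor is `0 / (2r - 1)`, which is `0` even when `r = 1/2`
        push_cast
        rw [sub_self, zero_div]
        ring
    rw [sum_range_succ, ih (by omega), splitDriftPMF, if_pos (by omega), splitDriftTail,
      splitDriftTail, prod_Icc_succ_top (by omega)]
    push_cast
    linear_combination (∏ i ∈ Icc 1 m, (((n : ℝ) - i) / ((n : ℝ) - i + 2 * r - 1))) /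
      (((n : ℝ) + 2 * r) * ((n : ℝ) + 2 * r - 1)) * step

lemma splitDriftTail_self {n : ℕ} (hn : 0 < n) (r : ℝ) : splitDriftTail n r n = 0 := by
  rw [splitDriftTail, prod_eq_zero (i := n) (mem_Icc.mpr ⟨hn, le_rfl⟩) (by simp), mul_zero]

lemma sum_splitDriftPMF_eq_one {n : ℕ} {r : ℝ} (hn : 0 < n) (hr : 0 < r) :
    ∑ k ∈ range n, splitDriftPMF n r k = 1 := by
  rw [sum_range_splitDriftPMF hn hr le_rfl, splitDriftTail_self hn, sub_zero]

lemma integral_beta_two_density {l : ℝ} (hl : 0 < l) {y : ℝ} (hy0 : 0 ≤ y) (hy1 : y ≤ 1) :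
    ∫ t in (0 : ℝ)..y, 2 * l * (2 * l + 1) * t * (1 - t) ^ (2 * l - 1) =
      1 - (1 + 2 * l * y) * (1 - y) ^ (2 * l) := by
  set F : ℝ → ℝ := fun t => -((1 + 2 * l * t) * (1 - t) ^ (2 * l))
  have hcont : Continuous F := by
    refine ((continuous_const.add (continuous_const.mul continuous_id)).mul
      ((continuous_const.sub continuous_id).rpow_const fun _ => Or.inr (by positivity))).neg
  have hderiv : ∀ t ∈ Set.Ioo 0 y,
      HasDerivAt F (2 * l * (2 * l + 1) * t * (1 - t) ^ (2 * l - 1)) t := by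
    rintro t ⟨-, hty⟩
    have h1t : 0 < 1 - t := by linarith
    have := (((hasDerivAt_id t).const_mul (2 * l)).const_add 1).mul
      (((hasDerivAt_id t).const_sub 1).rpow_const (p := 2 * l) (Or.inl h1t.ne'))
    have hpow : (1 - t) ^ (2 * l) = (1 - t) ^ (2 * l - 1) * (1 - t) := by
      rw [← rpow_add_one h1t.ne', sub_add_cancel]
    refine this.neg.congr_deriv ?_
    simp only [id, hpow]
    ring
  have hpos : ∀ t ∈ Set.Ioo 0 y, 0 ≤ 2 * l * (2 * l + 1) * t * (1 - t) ^ (2 * l - 1) := by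
    rintro t ⟨ht0, hty⟩
    have : 0 ≤ 1 - t := by linarith
    positivity
  rw [intervalIntegral.integral_eq_sub_of_hasDerivAt_of_le hy0 hcont.continuousOn hderiv
    (intervalIntegral.intervalIntegrable_deriv_of_nonneg hcont.continuousOn
      (by simpa [hy0] using hderiv) (by simpa [hy0] using hpos))]
  simp only [F, mul_zero, add_zero, sub_zero, one_rpow, mul_one]
  ring

lemma tendsto_sum_range_inv_sub_log :
    Tendsto (fun N : ℕ => ∑ i ∈ range N, (i : ℝ)⁻¹ - log N) atTop
      (𝓝 eulerMascheroniConstant) := by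
  -- the `i = 0` term is `0⁻¹ = 0`
  have hsum (N : ℕ) : ∑ i ∈ range N, (i : ℝ)⁻¹ = harmonic N - (N : ℝ)⁻¹ := by
    have := sum_range_succ' (fun i : ℕ => (i : ℝ)⁻¹) N
    rw [sum_range_succ] at this
    simp only [harmonic, Nat.cast_zero, inv_zero, add_zero] at this ⊢
    push_cast at this ⊢
    linarith
  have := tendsto_harmonic_sub_log.sub
    (tendsto_inv_atTop_zero.comp (tendsto_natCast_atTop_atTop (R := ℝ)))
  rw [sub_zero] at this
  refine this.congr fun N => ?_
  simp only [Function.comp_apply, hsum]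
  ring

lemma tendsto_sum_Ico_inv {f g : ℕ → ℕ} {t : ℝ} (hfg : ∀ n, f n ≤ g n)
    (hf : Tendsto f atTop atTop) (ht₀ : 0 < t)
    (ht : Tendsto (fun n => (f n : ℝ) / g n) atTop (𝓝 t)) :
    Tendsto (fun n => ∑ i ∈ Ico (f n) (g n), (i : ℝ)⁻¹) atTop (𝓝 (-log t)) := by
  have hS := tendsto_sum_range_inv_sub_log
  have := ((hS.comp (tendsto_atTop_mono hfg hf)).sub (hS.comp hf)).sub
    ((continuousAt_log ht₀.ne').tendsto.comp ht)
  rw [sub_self, zero_sub] at this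
  refine this.congr' ?_
  filter_upwards [hf.eventually_gt_atTop 0] with n hn
  have hg : 0 < g n := hn.trans_le (hfg n)
  simp only [Function.comp_apply]
  rw [sum_Ico_eq_sub _ (hfg n), log_div (by positivity) (by positivity)]
  ring

lemma abs_log_add_sub_log_sub_div_le {x a : ℝ} (hx : 0 < x) (hxa : 0 < x + a) :
    |log (x + a) - log x - a / x| ≤ a ^ 2 / (x * (x + a)) := by
  have hq : 0 < (x + a) / x := div_pos hxa hx
  have hupper := log_le_sub_one_of_pos hq
  have hlower := one_sub_inv_le_log_of_pos hq
  rw [log_div hxa.ne' hx.ne'] at hupper hlower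
  have e₁ : (x + a) / x - 1 = a / x := by field_simp; ring
  have e₂ : 1 - ((x + a) / x)⁻¹ = a / x - a ^ 2 / (x * (x + a)) := by field_simp; ring
  rw [abs_le]
  constructor <;> linarith

lemma tendsto_sum_Ico_log_add_sub_log {f g : ℕ → ℕ} {t α : ℝ} {a : ℕ → ℝ}
    (hfg : ∀ n, f n ≤ g n) (hf : Tendsto f atTop atTop) (ht₀ : 0 < t)
    (ht : Tendsto (fun n => (f n : ℝ) / g n) atTop (𝓝 t)) (ha : Tendsto a atTop (𝓝 α)) :
    Tendsto (fun n => ∑ i ∈ Ico (f n) (g n), (log (i + a n) - log i)) atTop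
      (𝓝 (-(α * log t))) := by
  have hfR : Tendsto (fun n => (f n : ℝ)) atTop atTop := tendsto_natCast_atTop_atTop.comp hf
  have hfa : Tendsto (fun n => (f n : ℝ) + a n) atTop atTop := hfR.atTop_add ha
  set B : ℕ → ℝ := fun n => a n ^ 2 * ((g n : ℝ) / f n) * ((f n : ℝ) + a n)⁻¹
  have hB : Tendsto B atTop (𝓝 0) := by
    simpa using ((ha.pow 2).mul (ht.inv₀ ht₀.ne')).mul (tendsto_inv_atTop_zero.comp hfa)
  have hmain := ha.mul (tendsto_sum_Ico_inv hfg hf ht₀ ht)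
  rw [mul_neg] at hmain
  suffices hE : Tendsto (fun n => ∑ i ∈ Ico (f n) (g n), (log (i + a n) - log i) -
      a n * ∑ i ∈ Ico (f n) (g n), (i : ℝ)⁻¹) atTop (𝓝 0) by
    simpa using hE.add hmain
  refine squeeze_zero_norm' ?_ hB
  filter_upwards [hf.eventually_gt_atTop 0, hfa.eventually_gt_atTop 0] with n hn hna
  have hg : (0 : ℝ) < g n := by exact_mod_cast hn.trans_le (hfg n)
  have hfn : (0 : ℝ) < f n := by exact_mod_cast hn
  have hterm : ∀ i ∈ Ico (f n) (g n),
      ‖log (i + a n) - log i - a n / i‖ ≤ a n ^ 2 / (f n * (f n + a n)) := by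
    intro i hi
    have hfi : (f n : ℝ) ≤ i := by exact_mod_cast (mem_Ico.mp hi).1
    refine (abs_log_add_sub_log_sub_div_le (by linarith) (by linarith)).trans ?_
    gcongr
  calc _ = ‖∑ i ∈ Ico (f n) (g n), (log (i + a n) - log i - a n / i)‖ := by
        rw [mul_sum, ← sum_sub_distrib]
        simp only [div_eq_mul_inv]
    _ ≤ (g n - f n : ℕ) * (a n ^ 2 / (f n * (f n + a n))) := by
        simpa using norm_sum_le_of_le _ hterm
    _ ≤ g n * (a n ^ 2 / (f n * (f n + a n))) := by
        gcongr
        exact_mod_cast Nat.sub_le _ _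
    _ = B n := by
        simp only [B]
        field_simp

lemma tendsto_prod_Ico_div_add {f g : ℕ → ℕ} {t α : ℝ} {a : ℕ → ℝ}
    (hfg : ∀ n, f n ≤ g n) (hf : Tendsto f atTop atTop) (ht₀ : 0 < t)
    (ht : Tendsto (fun n => (f n : ℝ) / g n) atTop (𝓝 t)) (ha : Tendsto a atTop (𝓝 α)) :
    Tendsto (fun n => ∏ i ∈ Ico (f n) (g n), (i : ℝ) / (i + a n)) atTop (𝓝 (t ^ α)) := by
  have hlog := ((continuous_exp.tendsto _).comp
    (tendsto_sum_Ico_log_add_sub_log hfg hf ht₀ ht ha).neg)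
  rw [Function.comp_def, neg_neg, mul_comm, ← rpow_def_of_pos ht₀] at hlog
  refine hlog.congr' ?_
  have hfa : Tendsto (fun n => (f n : ℝ) + a n) atTop atTop :=
    (tendsto_natCast_atTop_atTop.comp hf).atTop_add ha
  filter_upwards [hf.eventually_gt_atTop 0, hfa.eventually_gt_atTop 0] with n hn hna
  rw [← sum_neg_distrib, exp_sum]
  refine prod_congr rfl fun i hi => ?_
  have hfi : (f n : ℝ) ≤ i := by exact_mod_cast (mem_Ico.mp hi).1
  have hi0 : (0 : ℝ) < i := lt_of_lt_of_le (by exact_mod_cast hn) hfi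
  rw [neg_sub, exp_sub, exp_log hi0, exp_log (by linarith)]

lemma prod_Icc_one_sub_eq_prod_Ico {M : Type*} [CommMonoid M] (F : ℝ → M) {m n : ℕ}
    (h : m ≤ n) : ∏ i ∈ Icc 1 m, F ((n : ℝ) - i) = ∏ i ∈ Ico (n - m) n, F i := by
  have := prod_Ico_reflect (fun j : ℕ => F j) 1 (by omega : m + 1 ≤ n + 1)
  rw [Nat.add_sub_add_right, Nat.add_sub_cancel] at this
  rw [← this, ← Ico_add_one_right_eq_Icc]
  refine prod_congr rfl fun i hi => ?_
  rw [Nat.cast_sub (by simp at hi; omega)]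

lemma tendsto_splitDriftTail_coeff {r : ℕ → ℝ} {l : ℝ} (h : Tendsto r atTop (𝓝 l))
    {m : ℕ → ℕ} {y : ℝ} (hm : Tendsto (fun n => (m n : ℝ) / n) atTop (𝓝 y)) :
    Tendsto (fun n : ℕ => ((n : ℝ) + 2 * r n - 1 - m n) *
      (2 * r n * ((m n : ℝ) - 1) + n + 4 * r n) / (((n : ℝ) + 2 * r n) * ((n : ℝ) + 2 * r n - 1)))
      atTop (𝓝 ((1 - y) * (1 + 2 * l * y))) := by
  have hn : Tendsto (fun n : ℕ => (n : ℝ)) atTop atTop := tendsto_natCast_atTop_atTop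
  have hu : Tendsto (fun n => r n / n) atTop (𝓝 0) := h.div_atTop hn
  have hw : Tendsto (fun n : ℕ => (n : ℝ)⁻¹) atTop (𝓝 0) := tendsto_inv_atTop_zero.comp hn
  have hv : Tendsto (fun n => 1 + 2 * (r n / n)) atTop (𝓝 1) := by
    simpa using (hu.const_mul 2).const_add 1
  have hnum := ((hv.sub hm).sub hw).mul
    ((((h.const_mul 2).mul hm).add_const 1).add (hu.const_mul 2))
  have hden := hv.mul (hv.sub hw)
  have hquot := hnum.div hden (by norm_num)
  rw [sub_zero, mul_zero, add_zero, sub_zero, one_mul, div_one, add_comm (2 * l * y)] at hquot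
  refine hquot.congr' ?_
  filter_upwards [eventually_gt_atTop 0, (hn.atTop_add (h.const_mul 2)).eventually_gt_atTop 1]
    with n hn₀ hr₁
  have : (n : ℝ) ≠ 0 := by positivity
  have : (n : ℝ) + 2 * r n - 1 ≠ 0 := by linarith
  rw [Pi.div_apply]
  field_simp
  ring

lemma tendsto_splitDriftTail {r : ℕ → ℝ} {l : ℝ} (h : Tendsto r atTop (𝓝 l))
    {m : ℕ → ℕ} {y : ℝ} (hy : y < 1) (hm : Tendsto (fun n => (m n : ℝ) / n) atTop (𝓝 y)) :
    Tendsto (fun n => splitDriftTail n (r n) (m n)) atTop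
      (𝓝 ((1 + 2 * l * y) * (1 - y) ^ (2 * l))) := by
  have hlarge : ∀ᶠ n : ℕ in atTop, 0 < n ∧ m n < n := by
    filter_upwards [eventually_gt_atTop 0, hm.eventually (gt_mem_nhds hy)] with n hn hmn
    rw [div_lt_one (by positivity), Nat.cast_lt] at hmn
    exact ⟨hn, hmn⟩
  have hsub : Tendsto (fun n => ((n - m n : ℕ) : ℝ) / n) atTop (𝓝 (1 - y)) := by
    refine (tendsto_const_nhds.sub hm).congr' ?_
    filter_upwards [hlarge] with n ⟨hn, hmn⟩
    have : (n : ℝ) ≠ 0 := by positivity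
    rw [Nat.cast_sub hmn.le]
    field_simp
  have hsub_atTop : Tendsto (fun n => n - m n) atTop atTop := by
    refine tendsto_natCast_atTop_iff.mp
      ((hsub.pos_mul_atTop (by linarith) tendsto_natCast_atTop_atTop).congr' ?_)
    filter_upwards [hlarge] with n ⟨hn, _⟩
    have : (n : ℝ) ≠ 0 := by positivity
    field_simp
  have hprod := tendsto_prod_Ico_div_add (fun n => Nat.sub_le n (m n)) hsub_atTop
    (by linarith) hsub ((h.const_mul 2).sub_const 1)
  have hlim : (1 - y) * (1 + 2 * l * y) * (1 - y) ^ (2 * l - 1) =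
      (1 + 2 * l * y) * (1 - y) ^ (2 * l) := by
    have : 1 - y ≠ 0 := by linarith
    rw [rpow_sub_one this]
    field_simp
  rw [← hlim]
  refine ((tendsto_splitDriftTail_coeff h hm).mul hprod).congr' ?_
  filter_upwards [hlarge] with n ⟨_, hmn⟩
  rw [splitDriftTail, ← prod_Icc_one_sub_eq_prod_Ico (fun x => x / (x + (2 * r n - 1))) hmn.le]
  simp only [← add_sub_assoc]

lemma tendsto_natFloor_mul_add_one_div {y : ℝ} (hy : 0 ≤ y) :
    Tendsto (fun n : ℕ => ((⌊(n : ℝ) * y⌋₊ + 1 : ℕ) : ℝ) / n) atTop (𝓝 y) := by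
  have hn : Tendsto (fun n : ℕ => (n : ℝ)) atTop atTop := tendsto_natCast_atTop_atTop
  have := ((tendsto_nat_floor_mul_div_atTop hy).comp hn).add (tendsto_inv_atTop_zero.comp hn)
  rw [add_zero] at this
  refine this.congr fun n => ?_
  simp only [Function.comp_apply, Nat.cast_add, Nat.cast_one, add_div, one_div, mul_comm y]

/-- If `r_n → r > 0`, then for every `y ∈ [0,1]`,
`∑_{k=0}^{⌊ny⌋} p_{n,r_n}(k) → ∫_0^y 2r(2r+1) x (1-x)^{2r-1} dx`; that is, the
rescaled degree `D_n/n` converges in distribution to a Beta(2, 2r) random variable. -/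
theorem rescaled_degree_cdf_tendsto_beta (r : ℕ → ℝ) (hr : ∀ n, 0 < r n)
    (l : ℝ) (hl : 0 < l) (h : Tendsto r atTop (nhds l))
    (y : ℝ) (hy : y ∈ Set.Icc (0 : ℝ) 1) :
    Tendsto (fun n : ℕ => ∑ k ∈ Finset.range (⌊(n : ℝ) * y⌋₊ + 1), splitDriftPMF n (r n) k)
      atTop
      (nhds (∫ t in (0 : ℝ)..y, 2 * l * (2 * l + 1) * t * (1 - t) ^ (2 * l - 1))) := by
  obtain ⟨hy0, hy1⟩ := hy
  rw [integral_beta_two_density hl hy0 hy1]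
  rcases hy1.lt_or_eq with hy1 | rfl
  · have hlim := tendsto_splitDriftTail h hy1 (tendsto_natFloor_mul_add_one_div hy0)
    refine (hlim.const_sub 1).congr' ?_
    filter_upwards [eventually_gt_atTop 0] with n hn
    have hfloor : ⌊(n : ℝ) * y⌋₊ < n :=
      (Nat.floor_lt (by positivity)).mpr (mul_lt_of_lt_one_right (by positivity) hy1)
    exact (sum_range_splitDriftPMF hn (hr n) hfloor).symm
  · rw [sub_self, zero_rpow (by positivity), mul_zero, sub_zero]
    refine tendsto_const_nhds.congr' ?_
    filter_upwards [eventually_gt_atTop 0] with n hn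
    rw [mul_one, Nat.floor_natCast, sum_range_succ, sum_splitDriftPMF_eq_one hn (hr n),
      splitDriftPMF, if_neg (lt_irrefl n), add_zero]
end

section
/- Let (r_n) and (g_n) be sequences of positive real numbers such that r_n → ∞, r_n·log(n)/n is bounded (i.e. r_n = O(n/log n)), g_n → ∞, and g_n/r_n → 0. Set k_n = ⌈n·g_n/r_n⌉. Then binom(n, k_n) · (1+r_n)^{−(k_n−1)} → 0 as n → ∞. (Consequently, the clique number κ_n of the split-and-drift random graph G_{n,r_n} is O_P(n/r_n).) -/
open Filter Real
open scoped Nat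

/-!
With `k ≥ n g / r`, the bound `C(n, k) ≤ (e n / k)^k` gives
`C(n, k) (1 + r)^{-(k-1)} ≤ (1 + r) (e r / (g (1 + r)))^k ≤ (1 + r) (e / g)^k`,
which is at most `(1 + r) e^{-k}` once `g ≥ e²`. Since `r log n ≤ C n`, we have
`r ≤ C n`, and `k r ≥ n g ≥ 2 C n ≥ 2 r log n` once `g ≥ 2C`, so `e^{-k} ≤ n^{-2}` and the
whole expression is at most `(1 + C n) / n²`.
-/

theorem Nat.choose_le_exp_one_mul_div_pow (n k : ℕ) :
    (n.choose k : ℝ) ≤ (exp 1 * n / k) ^ k := by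
  rcases k.eq_zero_or_pos with rfl | hk
  · simp
  calc (n.choose k : ℝ) ≤ (n : ℝ) ^ k / (k ! : ℝ) := Nat.choose_le_pow_div k n
    _ = ((k : ℝ) ^ k / (k ! : ℝ)) * ((n : ℝ) / k) ^ k := by
        rw [div_pow]; field_simp
    _ ≤ exp 1 ^ k * ((n : ℝ) / k) ^ k := by
        gcongr
        rw [exp_one_pow]
        exact pow_div_factorial_le_exp _ k.cast_nonneg k
    _ = (exp 1 * n / k) ^ k := by rw [← mul_pow, mul_div_assoc]

theorem choose_mul_one_add_zpow_le (n k : ℕ) {r g : ℝ} (hr : 0 < r) (hg : 0 < g)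
    (hk : n * g / r ≤ k) :
    (n.choose k : ℝ) * (1 + r) ^ (-((k : ℤ) - 1)) ≤ (1 + r) * (exp 1 / g) ^ k := by
  have hr1 : 0 < 1 + r := by linarith
  have hnk : (n : ℝ) / k ≤ r / g := by
    rcases k.eq_zero_or_pos with rfl | hk0
    · simp only [CharP.cast_eq_zero, div_zero]
      positivity
    rw [div_le_div_iff₀ (by positivity) hg]
    rw [div_le_iff₀ hr] at hk
    linarith
  have hratio : r / (1 + r) ≤ 1 := (div_le_one hr1).2 (by linarith)
  calc (n.choose k : ℝ) * (1 + r) ^ (-((k : ℤ) - 1))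
      ≤ (exp 1 * n / k) ^ k * ((1 + r) / (1 + r) ^ k) := by
        rw [neg_sub, zpow_sub₀ hr1.ne', zpow_one, zpow_natCast]
        gcongr
        exact Nat.choose_le_exp_one_mul_div_pow n k
    _ ≤ (exp 1 * (r / g)) ^ k * ((1 + r) / (1 + r) ^ k) := by
        rw [mul_div_assoc]
        gcongr
    _ = (1 + r) * (exp 1 / g * (r / (1 + r))) ^ k := by
        simp only [mul_pow, div_pow]
        field_simp
    _ ≤ (1 + r) * (exp 1 / g) ^ k := by
        gcongr
        exact mul_le_of_le_one_right (by positivity) hratio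

theorem choose_mul_one_add_zpow_le_div_sq {n k : ℕ} {r g C : ℝ} (hr : 0 < r) (hn : 3 ≤ n)
    (hrC : r * log n / n ≤ C) (hgC : 2 * C ≤ g) (hge : exp 2 ≤ g) (hk : n * g / r ≤ k) :
    (n.choose k : ℝ) * (1 + r) ^ (-((k : ℤ) - 1)) ≤ (1 + C * n) / n ^ 2 := by
  have hn0 : (0 : ℝ) < n := by positivity
  have hg0 : 0 < g := (exp_pos 2).trans_le hge
  have hlog : 1 ≤ log n := by
    rw [le_log_iff_exp_le hn0]
    exact exp_one_lt_three.le.trans (by exact_mod_cast hn)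
  have hrC' : r * log n ≤ C * n := (div_le_iff₀ hn0).1 hrC
  have hrn : r ≤ C * n := by nlinarith
  have hkn : 2 * log n ≤ k := by
    refine le_of_mul_le_mul_right ?_ hr
    nlinarith [(div_le_iff₀ hr).1 hk]
  have hbase : exp 1 / g ≤ exp (-1) := by
    rw [div_le_iff₀ hg0]
    calc exp 1 = exp (-1) * exp 2 := by rw [← exp_add]; norm_num
      _ ≤ exp (-1) * g := by gcongr
  calc (n.choose k : ℝ) * (1 + r) ^ (-((k : ℤ) - 1))
      ≤ (1 + r) * (exp 1 / g) ^ k := choose_mul_one_add_zpow_le n k hr hg0 hk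
    _ ≤ (1 + C * n) * exp (-1) ^ k := by
        gcongr
        linarith
    _ ≤ (1 + C * n) * exp (-(2 * log n)) := by
        rw [← exp_nat_mul]
        gcongr
        · linarith
        · linarith
    _ = (1 + C * n) / n ^ 2 := by
        rw [exp_neg, ← Nat.cast_ofNat, ← log_pow, exp_log (by positivity), div_eq_mul_inv]

theorem tendsto_one_add_mul_div_sq (C : ℝ) :
    Tendsto (fun n : ℕ => (1 + C * n) / (n : ℝ) ^ 2) atTop (nhds 0) := by
  have h : Tendsto (fun n : ℕ => ((n : ℝ) ^ 2)⁻¹ + C * (n : ℝ)⁻¹) atTop (nhds (0 + C * 0)) :=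
    (tendsto_inv_atTop_zero.comp ((tendsto_pow_atTop two_ne_zero).comp
      tendsto_natCast_atTop_atTop)).add
      ((tendsto_inv_atTop_zero.comp tendsto_natCast_atTop_atTop).const_mul C)
  rw [mul_zero, add_zero] at h
  refine h.congr' ((eventually_ne_atTop 0).mono fun n hn => ?_)
  have : (n : ℝ) ≠ 0 := by exact_mod_cast hn
  field_simp

theorem expected_cliques_tendsto_zero_general_general (r g : ℕ → ℝ)
    (hr : ∀ n, 0 < r n)
    (h2 : ∃ C : ℝ, ∀ n : ℕ, r n * Real.log n / n ≤ C)
    (h3 : Tendsto g atTop atTop) :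
    Tendsto
      (fun n : ℕ =>
        (n.choose ⌈(n : ℝ) * g n / r n⌉₊ : ℝ) *
          (1 + r n) ^ (-((⌈(n : ℝ) * g n / r n⌉₊ : ℤ) - 1)))
      atTop (nhds 0) := by
  obtain ⟨C, hC⟩ := h2
  refine squeeze_zero' (Eventually.of_forall fun n => ?_) ?_ (tendsto_one_add_mul_div_sq C)
  · have := hr n
    positivity
  filter_upwards [h3.eventually_ge_atTop (2 * C), h3.eventually_ge_atTop (exp 2),
    eventually_ge_atTop 3] with n hgC hge hn
  exact choose_mul_one_add_zpow_le_div_sq (hr n) hn (hC n) hgC hge (Nat.le_ceil _)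

/-- If `r_n → ∞`, `r_n = O(n/log n)`, `g_n → ∞` and `g_n/r_n → 0`, and
`k_n = ⌈n g_n / r_n⌉`, then `C(n, k_n) · (1+r_n)^{-(k_n-1)} → 0`. (Hence the
clique number of `G_{n,r_n}` is `O_P(n/r_n)`.) -/
theorem expected_cliques_tendsto_zero_general (r g : ℕ → ℝ)
    (hr : ∀ n, 0 < r n) (hg : ∀ n, 0 < g n)
    (h1 : Tendsto r atTop atTop)
    (h2 : ∃ C : ℝ, ∀ n : ℕ, r n * Real.log n / n ≤ C)
    (h3 : Tendsto g atTop atTop)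
    (h4 : Tendsto (fun n => g n / r n) atTop (nhds 0)) :
    Tendsto
      (fun n : ℕ =>
        (n.choose ⌈(n : ℝ) * g n / r n⌉₊ : ℝ) *
          (1 + r n) ^ (-((⌈(n : ℝ) * g n / r n⌉₊ : ℤ) - 1)))
      atTop (nhds 0) :=
  expected_cliques_tendsto_zero_general_general r g hr h2 h3
end
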